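/- Let ℓ : ℝ^{m×n} → ℝ be any function that is bounded below, and let λ ≥ 0. Then the infimum over all pairs (U, V), with U an m × min(m,n) matrix and V a min(m,n) × n matrix, of ℓ(U·V) + (λ/2)(‖U‖_F² + ‖V‖_F²) equals the infimum over all m × n matrices W of ℓ(W) + λ‖W‖_T. -/

import Mathlib

open Matrix BigOperators

/-- The Frobenius norm of a real matrix. -/
noncomputable def frobeniusNorm {m n : ℕ} (A : Matrix (Fin m) (Fin n) ℝ) : ℝ :=
  Real.sqrt (∑ i, ∑ j, (A i j) ^ 2)

/-- The full list of `n` singular values of an `m × n` real matrix `W`, namely the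
nonnegative square roots of the eigenvalues of `Wᵀ * W`. (At most `min m n` of these
are nonzero.) -/
noncomputable def singularValuesFull {m n : ℕ} (W : Matrix (Fin m) (Fin n) ℝ) :
    Fin n → ℝ :=
  fun i => Real.sqrt ((show (Wᵀ * W).IsHermitian by
    simpa [Matrix.conjTranspose_eq_transpose_of_trivial] using
      Matrix.isHermitian_conjTranspose_mul_self W).eigenvalues i)

/-- The trace norm (nuclear norm) of a real matrix: the sum of its singular values. -/
noncomputable def traceNorm {m n : ℕ} (W : Matrix (Fin m) (Fin n) ℝ) : ℝ :=
  ∑ i, singularValuesFull W i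

/-- `σ : Fin (min m n) → ℝ` is "the vector of singular values" of `W` when its entries
are nonnegative and, after padding with `n - min m n` zeros, it agrees (as a multiset)
with the nonnegative square roots of the eigenvalues of `Wᵀ * W`. -/
def IsSingularValueVector {m n : ℕ} (W : Matrix (Fin m) (Fin n) ℝ)
    (σ : Fin (min m n) → ℝ) : Prop :=
  (∀ i, 0 ≤ σ i) ∧
    Multiset.map σ Finset.univ.val + Multiset.replicate (n - min m n) 0
      = Multiset.map (singularValuesFull W) Finset.univ.val

/-! The trace norm of `W` is `tr (Pᵀ W Q)` for the partial isometries `Q` (eigenvectors of `Wᵀ W`)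
and `P = W Q Σ⁻¹`. For any factorization `W = U V` this reads `‖W‖_T = ⟪Uᵀ P, V Q⟫_F`, and
since multiplying by a partial isometry does not increase the Frobenius norm, AM-GM gives
`‖W‖_T ≤ (‖U‖_F² + ‖V‖_F²) / 2`. Equality is attained by `U = W Q Σ^(-1/2)`, `V = Σ^(1/2) Qᵀ`,
of inner dimension `n`. These two facts make the trace norm invariant under transposition, so
transposing gives an optimal factorization of inner dimension `m` as well. Hence every value of one
objective is dominated by a value of the other, and the two infima agree. -/

section Frobenius

variable {m n k : ℕ}

lemma frobeniusNorm_sq_eq_trace (A : Matrix (Fin m) (Fin n) ℝ) :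
    frobeniusNorm A ^ 2 = trace (Aᵀ * A) := by
  rw [frobeniusNorm, Real.sq_sqrt (by positivity), Finset.sum_comm]
  simp [trace, mul_apply, sq]

lemma frobeniusNorm_transpose (A : Matrix (Fin m) (Fin n) ℝ) :
    frobeniusNorm Aᵀ = frobeniusNorm A := by
  rw [frobeniusNorm, frobeniusNorm, Finset.sum_comm]
  rfl

lemma trace_transpose_mul_comm (A B : Matrix (Fin m) (Fin n) ℝ) :
    trace (Bᵀ * A) = trace (Aᵀ * B) := by
  rw [← trace_transpose, transpose_mul, transpose_transpose]

lemma trace_transpose_mul_le (A B : Matrix (Fin m) (Fin n) ℝ) :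
    trace (Aᵀ * B) ≤ (frobeniusNorm A ^ 2 + frobeniusNorm B ^ 2) / 2 := by
  have h := sq_nonneg (frobeniusNorm (A - B))
  rw [frobeniusNorm_sq_eq_trace, transpose_sub, Matrix.sub_mul, Matrix.mul_sub, Matrix.mul_sub,
    trace_sub, trace_sub, trace_sub, trace_transpose_mul_comm A B] at h
  rw [frobeniusNorm_sq_eq_trace, frobeniusNorm_sq_eq_trace]
  linarith

lemma frobeniusNorm_mul_le_of_partialIsometry (A : Matrix (Fin m) (Fin n) ℝ)
    {P : Matrix (Fin n) (Fin k) ℝ} (hP : P * Pᵀ * P = P) :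
    frobeniusNorm (A * P) ≤ frobeniusNorm A := by
  -- `R` is an orthogonal projection, and `‖A‖² = ‖A P‖² + ‖A R‖²`.
  set R := 1 - P * Pᵀ
  have hR : R * Rᵀ = R := by
    simp only [R, transpose_sub, transpose_one, transpose_mul, transpose_transpose, Matrix.sub_mul,
      Matrix.mul_sub, Matrix.one_mul, Matrix.mul_one, ← Matrix.mul_assoc, hP]
    abel
  have hAP : frobeniusNorm (A * P) ^ 2 = trace (Aᵀ * A * (P * Pᵀ)) := by
    rw [frobeniusNorm_sq_eq_trace, transpose_mul, Matrix.mul_assoc, trace_mul_comm,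
      Matrix.mul_assoc, Matrix.mul_assoc, Matrix.mul_assoc]
  have hAR : frobeniusNorm (A * R)ᵀ ^ 2 = trace (Aᵀ * A) - trace (Aᵀ * A * (P * Pᵀ)) := by
    rw [frobeniusNorm_sq_eq_trace, transpose_transpose, transpose_mul, Matrix.mul_assoc,
      ← Matrix.mul_assoc R, hR, trace_mul_comm A, Matrix.mul_assoc, trace_mul_comm R]
    simp only [R, Matrix.mul_sub, Matrix.mul_one, trace_sub]
  have hA := frobeniusNorm_sq_eq_trace A
  refine le_of_sq_le_sq ?_ (Real.sqrt_nonneg _)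
  nlinarith [sq_nonneg (frobeniusNorm (A * R)ᵀ)]

end Frobenius

/-- The factorizations attaining equality in `traceNorm_mul_le`. -/
def IsTraceNormFactorization {m n k : ℕ} (W : Matrix (Fin m) (Fin n) ℝ)
    (U : Matrix (Fin m) (Fin k) ℝ) (V : Matrix (Fin k) (Fin n) ℝ) : Prop :=
  U * V = W ∧ frobeniusNorm U ^ 2 + frobeniusNorm V ^ 2 = 2 * traceNorm W

section SingularValueDecomposition

variable {m n : ℕ} (W : Matrix (Fin m) (Fin n) ℝ)

lemma isHermitian_transpose_mul_self : (Wᵀ * W).IsHermitian := by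
  simpa [conjTranspose_eq_transpose_of_trivial] using isHermitian_conjTranspose_mul_self W

noncomputable def rightSingularVectors : Matrix (Fin n) (Fin n) ℝ :=
  (isHermitian_transpose_mul_self W).eigenvectorUnitary

lemma rightSingularVectors_mul_transpose :
    rightSingularVectors W * (rightSingularVectors W)ᵀ = 1 := by
  simpa [rightSingularVectors, star_eq_conjTranspose, conjTranspose_eq_transpose_of_trivial]
    using Unitary.coe_mul_star_self (isHermitian_transpose_mul_self W).eigenvectorUnitary

lemma transpose_mul_rightSingularVectors :
    (rightSingularVectors W)ᵀ * rightSingularVectors W = 1 := by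
  simpa [rightSingularVectors, star_eq_conjTranspose, conjTranspose_eq_transpose_of_trivial]
    using Unitary.coe_star_mul_self (isHermitian_transpose_mul_self W).eigenvectorUnitary

lemma singularValuesFull_nonneg (i : Fin n) : 0 ≤ singularValuesFull W i :=
  Real.sqrt_nonneg _

lemma transpose_mul_self_mul_rightSingularVectors :
    (W * rightSingularVectors W)ᵀ * (W * rightSingularVectors W) =
      diagonal fun i => singularValuesFull W i ^ 2 := by
  have h := (isHermitian_transpose_mul_self W).conjStarAlgAut_star_eigenvectorUnitary
  simp only [Unitary.conjStarAlgAut_star_apply, star_eq_conjTranspose,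
    conjTranspose_eq_transpose_of_trivial] at h
  rw [transpose_mul, ← Matrix.mul_assoc, Matrix.mul_assoc _ Wᵀ]
  refine h.trans (congrArg diagonal (funext fun i => ?_))
  exact (Real.sq_sqrt (eigenvalues_conjTranspose_mul_self_nonneg W i)).symm

lemma exists_partialIsometries_traceNorm_eq :
    ∃ (P : Matrix (Fin m) (Fin n) ℝ) (Q : Matrix (Fin n) (Fin n) ℝ),
      P * Pᵀ * P = P ∧ Q * Qᵀ * Q = Q ∧ traceNorm W = trace (Pᵀ * W * Q) := by
  set Q := rightSingularVectors W
  set s := singularValuesFull W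
  have hB : (W * Q)ᵀ * (W * Q) = diagonal fun i => s i ^ 2 :=
    transpose_mul_self_mul_rightSingularVectors W
  -- As `0⁻¹ = 0`, the columns of `P` for vanishing singular values are zero.
  refine ⟨W * Q * diagonal fun i => (s i)⁻¹, Q, ?_, ?_, ?_⟩
  · calc _ = W * Q * (diagonal (fun i => (s i)⁻¹) * diagonal (fun i => (s i)⁻¹) *
            ((W * Q)ᵀ * (W * Q)) * diagonal fun i => (s i)⁻¹) := by
          simp only [transpose_mul, diagonal_transpose, Matrix.mul_assoc]
      _ = _ := by
          rw [hB, diagonal_mul_diagonal, diagonal_mul_diagonal, diagonal_mul_diagonal]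
          congr 2
          funext i
          rcases eq_or_ne (s i) 0 with h | h <;> field_simp [h]
  · rw [rightSingularVectors_mul_transpose, Matrix.one_mul]
  · calc traceNorm W = trace (diagonal s) := (trace_diagonal s).symm
      _ = trace (diagonal (fun i => (s i)⁻¹) * ((W * Q)ᵀ * (W * Q))) := by
          rw [hB, diagonal_mul_diagonal]
          congr 2
          funext i
          rcases eq_or_ne (s i) 0 with h | h <;> field_simp [h]
      _ = _ := by simp only [transpose_mul, diagonal_transpose, Matrix.mul_assoc]

theorem traceNorm_mul_le {k : ℕ} (U : Matrix (Fin m) (Fin k) ℝ) (V : Matrix (Fin k) (Fin n) ℝ) :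
    traceNorm (U * V) ≤ (frobeniusNorm U ^ 2 + frobeniusNorm V ^ 2) / 2 := by
  obtain ⟨P, Q, hP, hQ, htr⟩ := exists_partialIsometries_traceNorm_eq (U * V)
  have hUP : frobeniusNorm (Uᵀ * P) ≤ frobeniusNorm U :=
    (frobeniusNorm_mul_le_of_partialIsometry Uᵀ hP).trans_eq (frobeniusNorm_transpose U)
  have hVQ : frobeniusNorm (V * Q) ≤ frobeniusNorm V := frobeniusNorm_mul_le_of_partialIsometry V hQ
  calc traceNorm (U * V) = trace ((Uᵀ * P)ᵀ * (V * Q)) := by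
        rw [htr, transpose_mul, transpose_transpose, Matrix.mul_assoc, Matrix.mul_assoc,
          Matrix.mul_assoc]
    _ ≤ (frobeniusNorm (Uᵀ * P) ^ 2 + frobeniusNorm (V * Q) ^ 2) / 2 := trace_transpose_mul_le _ _
    _ ≤ _ := by gcongr <;> exact Real.sqrt_nonneg _

lemma exists_isTraceNormFactorization_square :
    ∃ (U : Matrix (Fin m) (Fin n) ℝ) (V : Matrix (Fin n) (Fin n) ℝ),
      IsTraceNormFactorization W U V := by
  set Q := rightSingularVectors W
  set s := singularValuesFull W
  set r := fun i => √(s i)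
  have hB : (W * Q)ᵀ * (W * Q) = diagonal fun i => s i ^ 2 :=
    transpose_mul_self_mul_rightSingularVectors W
  have hr : ∀ i, r i ^ 2 = s i := fun i => Real.sq_sqrt (singularValuesFull_nonneg W i)
  refine ⟨W * Q * diagonal fun i => (r i)⁻¹, diagonal r * Qᵀ, ?_, ?_⟩
  · have hcol : ∀ a i, s i = 0 → (W * Q) a i = 0 := by
      intro a i hi
      have h := congrFun (congrFun hB i) i
      rw [mul_apply', diagonal_apply_eq, hi, zero_pow two_ne_zero] at h
      exact congrFun (dotProduct_self_eq_zero.mp h) a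
    calc _ = W * Q * diagonal (fun i => (r i)⁻¹ * r i) * Qᵀ := by
          rw [← Matrix.mul_assoc, Matrix.mul_assoc (W * Q), diagonal_mul_diagonal]
      _ = W * Q * Qᵀ := by
          congr 1
          ext a i
          rw [mul_diagonal]
          rcases eq_or_ne (s i) 0 with h | h
          · simp [hcol a i h]
          · rw [inv_mul_cancel₀ (Real.sqrt_ne_zero'.mpr
              ((singularValuesFull_nonneg W i).lt_of_ne' h)), mul_one]
      _ = W := by rw [Matrix.mul_assoc, rightSingularVectors_mul_transpose, Matrix.mul_one]
  · have hU : frobeniusNorm (W * Q * diagonal fun i => (r i)⁻¹) ^ 2 = traceNorm W := by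
      rw [frobeniusNorm_sq_eq_trace, transpose_mul, diagonal_transpose, Matrix.mul_assoc,
        ← Matrix.mul_assoc (W * Q)ᵀ, hB, diagonal_mul_diagonal, diagonal_mul_diagonal,
        trace_diagonal]
      refine Finset.sum_congr rfl fun i _ => ?_
      change _ = s i
      rw [← hr]
      rcases eq_or_ne (r i) 0 with h | h <;> field_simp [h]
    have hV : frobeniusNorm (diagonal r * Qᵀ) ^ 2 = traceNorm W := by
      rw [← frobeniusNorm_transpose, frobeniusNorm_sq_eq_trace, transpose_transpose, transpose_mul,
        transpose_transpose, diagonal_transpose, Matrix.mul_assoc, ← Matrix.mul_assoc Qᵀ,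
        transpose_mul_rightSingularVectors, Matrix.one_mul, diagonal_mul_diagonal, trace_diagonal]
      exact Finset.sum_congr rfl fun i _ => by rw [← sq, hr]
    rw [hU, hV]
    ring

end SingularValueDecomposition

section Factorization

variable {m n k : ℕ}

lemma traceNorm_transpose_le (W : Matrix (Fin m) (Fin n) ℝ) : traceNorm Wᵀ ≤ traceNorm W := by
  obtain ⟨U, V, hUV, hnorm⟩ := exists_isTraceNormFactorization_square W
  calc traceNorm Wᵀ = traceNorm (Vᵀ * Uᵀ) := by rw [← transpose_mul, hUV]
    _ ≤ (frobeniusNorm Vᵀ ^ 2 + frobeniusNorm Uᵀ ^ 2) / 2 := traceNorm_mul_le _ _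
    _ = traceNorm W := by rw [frobeniusNorm_transpose, frobeniusNorm_transpose]; linarith

lemma traceNorm_transpose (W : Matrix (Fin m) (Fin n) ℝ) : traceNorm Wᵀ = traceNorm W :=
  le_antisymm (traceNorm_transpose_le W) (by simpa using traceNorm_transpose_le Wᵀ)

lemma IsTraceNormFactorization.transpose {W : Matrix (Fin m) (Fin n) ℝ}
    {U : Matrix (Fin m) (Fin k) ℝ} {V : Matrix (Fin k) (Fin n) ℝ}
    (h : IsTraceNormFactorization W U V) : IsTraceNormFactorization Wᵀ Vᵀ Uᵀ := by
  obtain ⟨hUV, hnorm⟩ := h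
  refine ⟨by rw [← transpose_mul, hUV], ?_⟩
  rw [frobeniusNorm_transpose, frobeniusNorm_transpose, traceNorm_transpose, ← hnorm, add_comm]

lemma exists_isTraceNormFactorization_min (W : Matrix (Fin m) (Fin n) ℝ) :
    ∃ (U : Matrix (Fin m) (Fin (min m n)) ℝ) (V : Matrix (Fin (min m n)) (Fin n) ℝ),
      IsTraceNormFactorization W U V := by
  rcases min_choice m n with h | h <;> rw [h]
  · obtain ⟨U, V, hUV⟩ := exists_isTraceNormFactorization_square Wᵀ
    exact ⟨Vᵀ, Uᵀ, by simpa using hUV.transpose⟩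
  · exact exists_isTraceNormFactorization_square W

end Factorization

lemma BddBelow.range_of_forall_exists_le {α ι ι' : Type*} [Preorder α] {f : ι → α} {g : ι' → α}
    (hf : BddBelow (Set.range f)) (h : ∀ j, ∃ i, f i ≤ g j) : BddBelow (Set.range g) := by
  obtain ⟨b, hb⟩ := hf
  refine ⟨b, Set.forall_mem_range.2 fun j => ?_⟩
  obtain ⟨i, hi⟩ := h j
  exact (hb (Set.mem_range_self i)).trans hi

theorem ciInf_eq_of_forall_exists_le {α ι ι' : Type*} [ConditionallyCompleteLinearOrder α]
    [Nonempty ι] [Nonempty ι'] {f : ι → α} {g : ι' → α}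
    (hfg : ∀ i, ∃ j, g j ≤ f i) (hgf : ∀ j, ∃ i, f i ≤ g j) : ⨅ i, f i = ⨅ j, g j := by
  by_cases hf : BddBelow (Set.range f)
  · exact le_antisymm (ciInf_mono_of_forall_exists hf hgf)
      (ciInf_mono_of_forall_exists (hf.range_of_forall_exists_le hgf) hfg)
  · rw [ciInf_of_not_bddBelow hf,
      ciInf_of_not_bddBelow fun hg => hf (hg.range_of_forall_exists_le hfg)]

theorem iInf_factored_loss_eq_iInf_trace_norm_loss_general {m n : ℕ}
    (ell : Matrix (Fin m) (Fin n) ℝ → ℝ)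
    (lam : ℝ) (hlam : 0 ≤ lam) :
    (⨅ p : Matrix (Fin m) (Fin (min m n)) ℝ × Matrix (Fin (min m n)) (Fin n) ℝ,
        (ell (p.1 * p.2) +
          lam / 2 * (frobeniusNorm p.1 ^ 2 + frobeniusNorm p.2 ^ 2)))
      = ⨅ W : Matrix (Fin m) (Fin n) ℝ, (ell W + lam * traceNorm W) := by
  refine ciInf_eq_of_forall_exists_le (fun p => ⟨p.1 * p.2, ?_⟩) (fun W => ?_)
  · have := mul_le_mul_of_nonneg_left (traceNorm_mul_le p.1 p.2) hlam
    linarith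
  · obtain ⟨U, V, hUV, hnorm⟩ := exists_isTraceNormFactorization_min W
    exact ⟨(U, V), le_of_eq <| by rw [hUV, hnorm]; ring⟩

theorem iInf_factored_loss_eq_iInf_trace_norm_loss {m n : ℕ}
    (ell : Matrix (Fin m) (Fin n) ℝ → ℝ) (hbdd : BddBelow (Set.range ell))
    (lam : ℝ) (hlam : 0 ≤ lam) :
    (⨅ p : Matrix (Fin m) (Fin (min m n)) ℝ × Matrix (Fin (min m n)) (Fin n) ℝ,
        (ell (p.1 * p.2) +
          lam / 2 * (frobeniusNorm p.1 ^ 2 + frobeniusNorm p.2 ^ 2)))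
      = ⨅ W : Matrix (Fin m) (Fin n) ℝ, (ell W + lam * traceNorm W) :=
  iInf_factored_loss_eq_iInf_trace_norm_loss_general ell lam hlam
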